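/- arXiv:1505.03086 — 4 statements merged into one kernel-verified Lean document; each statement's English description precedes it below -/
import Mathlib

section
/- Let $k \geq 2$ be an integer and let $a_1, \ldots, a_p$ be nonnegative integers with $a_i \leq k$ for all $i$ and $\sum_{i=1}^p a_i = k+1$. Then $\left(\prod_{i=1}^p \binom{k}{a_i}\right) \cdot \left(\sum_{s<t} a_s a_t - k\right) \geq 0$. -/
/-!
Writing `T = ∑ aᵢ = k + 1`, the pair sum is `(T² - ∑ aᵢ²) / 2`, so it suffices that
`∑ aᵢ² ≤ k² + 1`. If some `aᵢ = k`, the remaining entries sum to `1` and contribute at most `1`;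
otherwise every `aᵢ ≤ k - 1` and `∑ aᵢ² ≤ (k - 1) ∑ aᵢ = k² - 1`. The binomial product is a
product of naturals, hence nonnegative.
-/

open Finset

theorem Finset.sq_sum_eq_sum_sq_add_two_mul_sum_lt {ι R : Type*} [Fintype ι] [LinearOrder ι]
    [CommSemiring R] (f : ι → R) :
    (∑ i, f i) ^ 2 = ∑ i, f i ^ 2 +
      2 * ∑ st ∈ univ.filter (fun st : ι × ι => st.1 < st.2), f st.1 * f st.2 := by
  have hswap : ∑ st ∈ univ.filter (fun st : ι × ι => st.2 < st.1), f st.1 * f st.2 =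
      ∑ st ∈ univ.filter (fun st : ι × ι => st.1 < st.2), f st.1 * f st.2 :=
    sum_equiv (Equiv.prodComm ι ι) (by simp) (fun _ _ => by simp [mul_comm])
  have hdiag : ∑ st ∈ univ.filter (fun st : ι × ι => ¬ st.1 < st.2 ∧ ¬ st.2 < st.1),
      f st.1 * f st.2 = ∑ i, f i ^ 2 := by
    simp only [not_lt, ← le_antisymm_iff, sum_filter, Fintype.sum_prod_type, sum_ite_eq',
      mem_univ, if_true, sq]
  have hoff : univ.filter (fun st : ι × ι => ¬ st.1 < st.2 ∧ st.2 < st.1) =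
      univ.filter (fun st : ι × ι => st.2 < st.1) :=
    filter_congr fun _ _ => and_iff_right_of_imp fun h => h.not_gt
  rw [sq, sum_mul_sum, ← Fintype.sum_prod_type', ← sum_filter_add_sum_filter_not _
    (fun st : ι × ι => st.1 < st.2), ← sum_filter_add_sum_filter_not
    (univ.filter fun st : ι × ι => ¬ st.1 < st.2) (fun st => st.2 < st.1), filter_filter,
    filter_filter, hoff, hswap, hdiag]
  ring

theorem Finset.sum_sq_le_sq_add_one_of_sum_eq_succ {ι : Type*} {s : Finset ι} {a : ι → ℕ}
    {k : ℕ} (ha : ∀ i ∈ s, a i ≤ k) (hsum : ∑ i ∈ s, a i = k + 1) :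
    ∑ i ∈ s, a i ^ 2 ≤ k ^ 2 + 1 := by
  classical
  by_cases hmax : ∃ i ∈ s, a i = k
  · obtain ⟨i, hi, hik⟩ := hmax
    have hrest : ∑ j ∈ s.erase i, a j = 1 := by
      rw [← add_sum_erase s a hi, hik] at hsum
      omega
    calc ∑ j ∈ s, a j ^ 2 = a i ^ 2 + ∑ j ∈ s.erase i, a j ^ 2 := (add_sum_erase s _ hi).symm
      _ ≤ k ^ 2 + (∑ j ∈ s.erase i, a j) ^ 2 := by
          rw [hik]; gcongr; exact sum_sq_le_sq_sum_of_nonneg fun _ _ => Nat.zero_le _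
      _ = k ^ 2 + 1 := by rw [hrest, one_pow]
  · push Not at hmax
    have hlt : ∑ i ∈ s, a i * (a i + 1) ≤ ∑ i ∈ s, a i * k :=
      sum_le_sum fun i hi => Nat.mul_le_mul_left _ ((ha i hi).lt_of_ne (hmax i hi))
    rw [← sum_mul, hsum] at hlt
    simp only [mul_add, mul_one, sum_add_distrib, hsum, ← sq] at hlt
    nlinarith

theorem chern_ineq_nonneg_general (k p : ℕ) (a : Fin p → ℕ)
    (ha : ∀ i, a i ≤ k) (hsum : ∑ i, a i = k + 1) :
    0 ≤ (∏ i, (k.choose (a i) : ℤ)) *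
      ((∑ st ∈ Finset.univ.filter (fun st : Fin p × Fin p => st.1 < st.2),
        (a st.1 : ℤ) * (a st.2 : ℤ)) - (k : ℤ)) := by
  have hsq := sq_sum_eq_sum_sq_add_two_mul_sum_lt fun i => (a i : ℤ)
  have hbound : ∑ i, (a i : ℤ) ^ 2 ≤ (k : ℤ) ^ 2 + 1 := by
    exact_mod_cast sum_sq_le_sq_add_one_of_sum_eq_succ (fun i _ => ha i) hsum
  rw [← Nat.cast_sum, hsum, Nat.cast_succ] at hsq
  refine mul_nonneg (prod_nonneg fun _ _ => Int.natCast_nonneg _) ?_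
  linarith

/-- Lemma 3.3 (nonnegativity): for `k ≥ 2` and nonnegative integers `a₁,…,a_p` with
`aᵢ ≤ k` and `∑ aᵢ = k+1`, the product `(∏ C(k,aᵢ)) · (∑_{s<t} a_s a_t − k)` is nonnegative. -/
theorem chern_ineq_nonneg (k p : ℕ) (hk : 2 ≤ k) (a : Fin p → ℕ)
    (ha : ∀ i, a i ≤ k) (hsum : ∑ i, a i = k + 1) :
    0 ≤ (∏ i, (k.choose (a i) : ℤ)) *
      ((∑ st ∈ Finset.univ.filter (fun st : Fin p × Fin p => st.1 < st.2),
        (a st.1 : ℤ) * (a st.2 : ℤ)) - (k : ℤ)) :=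
  chern_ineq_nonneg_general k p a ha hsum
end

section
/- Let $k \geq 2$ be an integer and let $a_1, \ldots, a_p$ be nonnegative integers with $a_i < k$ for all $i$ and $\sum_{i=1}^p a_i = k+1$. Then $\left(\prod_{i=1}^p \binom{k}{a_i}\right) \cdot \left(\sum_{s<t} a_s a_t - k\right) > 0$. -/
/-!
Expanding `(∑ aᵢ)² = ∑ aᵢ² + 2 ∑_{s<t} a_s a_t` with `∑ aᵢ = k + 1`, and bounding
`∑ aᵢ² ≤ (k - 1) ∑ aᵢ = (k - 1)(k + 1)` since every `aᵢ ≤ k - 1`, gives `∑_{s<t} a_s a_t ≥ k + 1`.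
The binomial coefficients are positive because `aᵢ ≤ k`.
-/

open Finset

theorem Finset.sum_sq_le_mul_sum {ι R : Type*} [Semiring R] [PartialOrder R]
    [IsOrderedRing R] {s : Finset ι} {f : ι → R} {M : R}
    (hf : ∀ i ∈ s, 0 ≤ f i ∧ f i ≤ M) :
    ∑ i ∈ s, f i ^ 2 ≤ M * ∑ i ∈ s, f i := by
  rw [mul_sum]
  exact sum_le_sum fun i hi => by
    rw [sq]
    exact mul_le_mul_of_nonneg_right (hf i hi).2 (hf i hi).1

theorem chern_ineq_pos_general (k p : ℕ) (a : Fin p → ℕ)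
    (ha : ∀ i, a i < k) (hsum : ∑ i, a i = k + 1) :
    0 < (∏ i, (k.choose (a i) : ℤ)) *
      ((∑ st ∈ Finset.univ.filter (fun st : Fin p × Fin p => st.1 < st.2),
        (a st.1 : ℤ) * (a st.2 : ℤ)) - (k : ℤ)) := by
  have hsumZ : ∑ i, (a i : ℤ) = k + 1 := by exact_mod_cast hsum
  have hprod : 0 < ∏ i, (k.choose (a i) : ℤ) :=
    prod_pos fun i _ => by exact_mod_cast Nat.choose_pos (ha i).le
  have hsq : ∑ i, (a i : ℤ) ^ 2 ≤ (k - 1) * ∑ i, (a i : ℤ) :=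
    sum_sq_le_mul_sum fun i _ => ⟨by positivity, by have := ha i; omega⟩
  have hexpand := sq_sum_eq_sum_sq_add_two_mul_sum_lt (fun i => (a i : ℤ))
  rw [hsumZ] at hsq hexpand
  exact mul_pos hprod (by nlinarith)

/-- Lemma 3.3 (positivity): for `k ≥ 2` and nonnegative integers `a₁,…,a_p` with
`aᵢ < k` and `∑ aᵢ = k+1`, the product `(∏ C(k,aᵢ)) · (∑_{s<t} a_s a_t − k)` is positive. -/
theorem chern_ineq_pos (k p : ℕ) (hk : 2 ≤ k) (a : Fin p → ℕ)
    (ha : ∀ i, a i < k) (hsum : ∑ i, a i = k + 1) :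
    0 < (∏ i, (k.choose (a i) : ℤ)) *
      ((∑ st ∈ Finset.univ.filter (fun st : Fin p × Fin p => st.1 < st.2),
        (a st.1 : ℤ) * (a st.2 : ℤ)) - (k : ℤ)) :=
  chern_ineq_pos_general k p a ha hsum
end

section
/- With $f$ defined as above with parameters $k \geq 1$, where $\alpha_1 = -e_1$ and $\alpha_0 = 1$: if $a_1, \ldots, a_p$ are nonnegative integers with $\sum_i a_i = k$ and $a_i \leq k$, then $f(a_1, \ldots, a_p) = 0$ in $R$. -/
/-!
Because `|a| = k`, the index of `α` is `1 - |d|`, so only `d = 0` and the unit vectors `d = δₛ`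
contribute. The term `d = 0` is `-e₁ ∏ᵢ C(k, k-aᵢ)`; the term `d = δₛ` is
`e₁ C(k-1, k-aₛ) ∏_{i ≠ s} C(k, k-aᵢ)`. By the absorption identity `k C(k-1, k-a) = a C(k, k-a)`,
`k` times the sum of the latter is `(∑ₛ aₛ) e₁ ∏ᵢ C(k, k-aᵢ) = k e₁ ∏ᵢ C(k, k-aᵢ)`, so the two
contributions cancel.
-/

open Finset

/-- Binomial coefficient with integer arguments and the convention
`C(a,b) = 0` if `b < 0` or `a < b`. -/
def zchoose (a b : ℤ) : ℤ :=
  if b < 0 ∨ a < b then 0 else (a.toNat.choose b.toNat : ℤ)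

/-- The class `f(a₁,…,a_p) = ∑_{d ∈ ℕᵖ} (∏ᵢ C(k-dᵢ, k-aᵢ) e_{dᵢ}) α_{|a|-|d|-(k-1)}`
from Section 3. The sum is finite: terms with some `dᵢ > k` vanish since `e_{dᵢ} = 0`,
so it suffices to sum over `dᵢ ≤ k`. -/
def fclass {R : Type*} [CommRing R] (k p : ℕ) (e : ℕ → R) (α : ℤ → R)
    (a : Fin p → ℕ) : R :=
  ∑ d ∈ Fintype.piFinset (fun _ : Fin p => Finset.range (k + 1)),
    (∏ i, (zchoose ((k : ℤ) - d i) ((k : ℤ) - a i) : R) * e (d i)) *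
      α ((∑ i, (a i : ℤ)) - (∑ i, (d i : ℤ)) - ((k : ℤ) - 1))

lemma Pi.single_left_injective {ι M : Type*} [DecidableEq ι] [Zero M] {b : M} (hb : b ≠ 0) :
    Function.Injective fun i : ι => Pi.single i b := by
  intro i j hij
  by_contra hne
  exact hb (by simpa [Pi.single_eq_of_ne hne] using congrFun hij i)

section Tuples

variable {ι : Type*} [Fintype ι] [DecidableEq ι]

lemma prod_apply_pi_single {M N : Type*} [CommMonoid M] [Zero N] (g : ι → N → M) (s : ι) (b : N) :
    ∏ i, g i ((Pi.single s b : ι → N) i) = g s b * ∏ i ∈ univ.erase s, g i 0 := by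
  rw [← mul_prod_erase univ _ (mem_univ s), Pi.single_eq_same]
  congr 1
  exact prod_congr rfl fun i hi => by rw [Pi.single_eq_of_ne (ne_of_mem_erase hi)]

lemma eq_zero_or_exists_eq_single_of_sum_le_one {d : ι → ℕ} (hd : ∑ i, d i ≤ 1) :
    d = 0 ∨ ∃ s, d = Pi.single s 1 := by
  by_cases h0 : d = 0
  · exact Or.inl h0
  obtain ⟨s, hs⟩ := Function.ne_iff.mp h0
  have hsplit := add_sum_erase univ d (mem_univ s)
  have hds : d s = 1 := by simp only [Pi.zero_apply] at hs; omega
  have hrest : ∀ i ∈ univ.erase s, d i = 0 := sum_eq_zero_iff.mp (by omega)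
  refine Or.inr ⟨s, funext fun i => ?_⟩
  rcases eq_or_ne i s with rfl | hi
  · rw [Pi.single_eq_same, hds]
  · rw [Pi.single_eq_of_ne hi, hrest i (mem_erase.mpr ⟨hi, mem_univ i⟩)]

lemma sum_piFinset_range_eq_zero_add_sum_single {M : Type*} [AddCommMonoid M] {n : ℕ}
    (hn : 1 ≤ n) (F : (ι → ℕ) → M) (hF : ∀ d, 2 ≤ ∑ i, d i → F d = 0) :
    ∑ d ∈ Fintype.piFinset (fun _ : ι => range (n + 1)), F d =
      F 0 + ∑ s, F (Pi.single s 1) := by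
  have h0 : (0 : ι → ℕ) ∉ univ.image fun s => Pi.single s 1 := by
    simp [funext_iff, Pi.single_apply]
  rw [← sum_image (Pi.single_left_injective one_ne_zero).injOn, ← sum_insert h0]
  symm
  apply sum_subset
  · simp only [subset_iff, mem_insert, mem_image, mem_univ, true_and, Fintype.mem_piFinset,
      mem_range]
    rintro d (rfl | ⟨s, rfl⟩) i
    · exact Nat.succ_pos n
    · rw [Pi.single_apply]
      split_ifs <;> omega
  · intro d _ hd
    apply hF
    by_contra! h
    rcases eq_zero_or_exists_eq_single_of_sum_le_one (by omega : ∑ i, d i ≤ 1) with rfl | ⟨s, rfl⟩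
      <;> simp at hd

end Tuples

lemma zchoose_natCast (n m : ℕ) : zchoose n m = n.choose m := by
  unfold zchoose
  split_ifs with h
  · rw [Nat.choose_eq_zero_of_lt (by omega), Nat.cast_zero]
  · simp

lemma zchoose_of_neg (a : ℤ) {b : ℤ} (hb : b < 0) : zchoose a b = 0 := by
  simp [zchoose, hb]

lemma natCast_mul_zchoose_sub_one (k a : ℕ) :
    (k : ℤ) * zchoose (k - 1) (k - a) = a * zchoose k (k - a) := by
  rcases lt_or_ge k a with hka | hak
  · rw [zchoose_of_neg _ (by omega), zchoose_of_neg _ (by omega), mul_zero, mul_zero]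
  obtain _ | n := k
  · obtain rfl : a = 0 := by omega
    simp
  rw [← Nat.cast_sub hak, Nat.cast_succ, add_sub_cancel_right, ← Nat.cast_succ,
    zchoose_natCast, zchoose_natCast, mul_comm, ← Nat.cast_mul, Nat.choose_mul_succ_eq,
    Nat.cast_mul, mul_comm, Nat.sub_sub_self hak]

lemma sum_zchoose_sub_one_mul_prod_erase {ι : Type*} [Fintype ι] [DecidableEq ι] {k : ℕ}
    (hk : k ≠ 0) (a : ι → ℕ) (hsum : ∑ i, a i = k) :
    ∑ s, zchoose (k - 1) (k - a s) * ∏ i ∈ univ.erase s, zchoose k (k - a i) =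
      ∏ i, zchoose k (k - a i) := by
  refine mul_left_cancel₀ (Nat.cast_ne_zero.mpr hk : (k : ℤ) ≠ 0) ?_
  calc (k : ℤ) * ∑ s, zchoose (k - 1) (k - a s) * ∏ i ∈ univ.erase s, zchoose k (k - a i)
      = ∑ s, (a s : ℤ) * ∏ i, zchoose k (k - a i) := by
        rw [mul_sum]
        refine sum_congr rfl fun s _ => ?_
        rw [← mul_assoc, natCast_mul_zchoose_sub_one, mul_assoc,
          mul_prod_erase _ (fun i => zchoose k (k - a i)) (mem_univ s)]
    _ = k * ∏ i, zchoose k (k - a i) := by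
        rw [← sum_mul, ← Nat.cast_sum, hsum]

theorem fclass_weight_k_general {R : Type*} [CommRing R] (k p : ℕ) (hk : 1 ≤ k)
    (e : ℕ → R) (α : ℤ → R) (he0 : e 0 = 1)
    (hα0 : α 0 = 1) (hα1 : α 1 = -e 1) (hαneg : ∀ j : ℤ, j < 0 → α j = 0)
    (a : Fin p → ℕ) (hsum : ∑ i, a i = k) :
    fclass k p e α a = 0 := by
  have hdeg : ∀ d : Fin p → ℕ,
      (∑ i, (a i : ℤ)) - ∑ i, (d i : ℤ) - (k - 1) = 1 - ((∑ i, d i : ℕ) : ℤ) := by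
    intro d
    rw [← Nat.cast_sum, hsum, Nat.cast_sum]
    ring
  have key := congrArg (Int.cast : ℤ → R) (sum_zchoose_sub_one_mul_prod_erase (by omega) a hsum)
  push_cast at key
  set c : Fin p → ℕ → R := fun i n => (zchoose (k - n) (k - a i) : R) * e n with hc
  have hterms : fclass k p e α a = ∑ d ∈ Fintype.piFinset fun _ => range (k + 1),
      (∏ i, c i (d i)) * α (1 - ((∑ i, d i : ℕ) : ℤ)) :=
    sum_congr rfl fun d _ => by rw [hdeg]
  rw [hterms, sum_piFinset_range_eq_zero_add_sum_single hk]
  · simp only [prod_apply_pi_single c]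
    simp only [hc, Pi.zero_apply, Nat.cast_zero, sub_zero, he0, mul_one, sum_const_zero,
      hα1, mul_neg, Nat.cast_one, sum_pi_single', mem_univ, ↓reduceIte, sub_self, hα0]
    rw [← key, sum_mul, neg_add_eq_zero]
    exact sum_congr rfl fun s _ => mul_right_comm _ _ _
  · intro d hd
    rw [hαneg _ (by omega), mul_zero]

/-- Lemma 3.2(2): if `|a| = k` and `aᵢ ≤ k`, then `f(a) = 0`. -/
theorem fclass_weight_k {R : Type*} [CommRing R] (k p : ℕ) (hk : 1 ≤ k)
    (e : ℕ → R) (α : ℤ → R) (he0 : e 0 = 1) (hek : ∀ i, k < i → e i = 0)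
    (hα0 : α 0 = 1) (hα1 : α 1 = -e 1) (hαneg : ∀ j : ℤ, j < 0 → α j = 0)
    (a : Fin p → ℕ) (ha : ∀ i, a i ≤ k) (hsum : ∑ i, a i = k) :
    fclass k p e α a = 0 :=
  fclass_weight_k_general k p hk e α he0 hα0 hα1 hαneg a hsum
end

section
/- In the polynomial ring $\mathbb{Q}[c_1, c_2, c_3, c_4]$ graded with $\deg c_i = i$, the degree-4 subspace spanned by $c_4$, $c_1 c_3$, and $3c_2^2 + 4c_1^2 c_2 - c_1^4$ does not contain $c_2^2$. -/
open MvPolynomial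

/-- In `ℚ[c₁,c₂,c₃,c₄]` (`cᵢ = X (i-1)`, `deg cᵢ = i`), the span of `c₄`, `c₁c₃` and
`3c₂² + 4c₁²c₂ - c₁⁴` (corresponding to the Euler characteristics `χᵖ` in complex
dimension 4) does not contain `c₂²`. -/
theorem c2sq_not_in_span :
    (X 1 ^ 2 : MvPolynomial (Fin 4) ℚ) ∉
      Submodule.span ℚ
        ({X 3, X 0 * X 2, 3 * X 1 ^ 2 + 4 * X 0 ^ 2 * X 1 - X 0 ^ 4} :
          Set (MvPolynomial (Fin 4) ℚ)) := by
  intro h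
  rw [Submodule.mem_span_insert] at h
  obtain ⟨a, z, hz, heq⟩ := h
  rw [Submodule.mem_span_insert] at hz
  obtain ⟨b, w, hw, heq2⟩ := hz
  rw [Submodule.mem_span_singleton] at hw
  obtain ⟨c, rfl⟩ := hw
  subst heq2
  have h1 := congrArg (eval (fun i : Fin 4 => if i = 1 then (1 : ℚ) else 0)) heq
  have h2 := congrArg (eval (fun i : Fin 4 => if i = 0 then (1 : ℚ) else 0)) heq
  simp [smul_eq_C_mul] at h1 h2
  linarith
end
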